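/- Let A be a finite type with adjacency relations H, V : A → A → Prop, let X be the set of valid tilings g : ℤ → ℤ → A (those satisfying H (g x y) (g (x+1) y) and V (g x y) (g x (y+1)) for all x, y), and let k ≥ 2 be a natural number. Suppose that for every g ∈ X and every period v of g (i.e. every v ∈ ℤ × ℤ with g (p + v) = g p for all p, reading g as a function on ℤ × ℤ) there exist g' ∈ X and a period w of g' with v = k • w. Then no tiling in X has a nonzero period; that is, every g ∈ X satisfying g (p + v) = g p for all p ∈ ℤ × ℤ must have v = 0. -/
import Mathlib


/-- `g` is a valid tiling of the plane for the tileset `(A, H, V)`. -/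
def IsTiling {A : Type*} (H V : A → A → Prop) (g : ℤ → ℤ → A) : Prop :=
  ∀ x y : ℤ, H (g x y) (g (x + 1) y) ∧ V (g x y) (g x (y + 1))

/-- `v` is a period of the configuration `g` (read as a function on `ℤ × ℤ`). -/
def IsPeriod {A : Type*} (g : ℤ → ℤ → A) (v : ℤ × ℤ) : Prop :=
  ∀ p : ℤ × ℤ, g (p.1 + v.1) (p.2 + v.2) = g p.1 p.2

/-- If every period of every valid tiling is `k` times a period of some valid
tiling, with `k ≥ 2`, then no valid tiling has a nonzero period. -/
theorem no_nonzero_period_of_desubstitution {A : Type*} [Fintype A]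
    (H V : A → A → Prop) (k : ℕ) (hk : 2 ≤ k)
    (hdesub : ∀ g, IsTiling H V g → ∀ v : ℤ × ℤ, IsPeriod g v →
      ∃ g', IsTiling H V g' ∧ ∃ w : ℤ × ℤ, IsPeriod g' w ∧ v = k • w) :
    ∀ g, IsTiling H V g → ∀ v : ℤ × ℤ, IsPeriod g v → v = 0 := by
  intro g hg v hv
  by_contra hne
  obtain ⟨n, hn⟩ : ∃ n, v.1.natAbs + v.2.natAbs = n := ⟨_, rfl⟩
  induction n using Nat.strong_induction_on generalizing g v with
  | _ n ih =>
    obtain ⟨g', hg', w, hw, hvw⟩ := hdesub g hg v hv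
    have hwne : w ≠ 0 := by
      rintro rfl; simp at hvw; exact hne (by simp [hvw])
    have hkpos : (0:ℤ) < (k:ℤ) := by positivity
    have h1 : v.1 = (k:ℤ) * w.1 := by rw [hvw]; simp [Prod.smul_def, mul_comm]
    have h2 : v.2 = (k:ℤ) * w.2 := by rw [hvw]; simp [Prod.smul_def, mul_comm]
    have hlt : w.1.natAbs + w.2.natAbs < n := by
      subst hn
      have hk2 : 2 ≤ k := hk
      have e1 : v.1.natAbs = k * w.1.natAbs := by
        rw [h1, Int.natAbs_mul, Int.natAbs_natCast]
      have e2 : v.2.natAbs = k * w.2.natAbs := by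
        rw [h2, Int.natAbs_mul, Int.natAbs_natCast]
      have hwpos : 0 < w.1.natAbs + w.2.natAbs := by
        rcases Nat.eq_zero_or_pos (w.1.natAbs + w.2.natAbs) with h | h
        · exfalso
          apply hwne
          ext
          · exact Int.natAbs_eq_zero.mp (Nat.add_eq_zero.mp h).1
          · exact Int.natAbs_eq_zero.mp (Nat.add_eq_zero.mp h).2
        · exact h
      calc w.1.natAbs + w.2.natAbs < 2 * (w.1.natAbs + w.2.natAbs) := by omega
        _ ≤ k * (w.1.natAbs + w.2.natAbs) := Nat.mul_le_mul_right _ hk2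
        _ = v.1.natAbs + v.2.natAbs := by rw [e1, e2, Nat.mul_add]
    exact ih _ hlt g' hg' w hw hwne rfl
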